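/- arXiv:2502.17942 — 2 statements merged into one kernel-verified Lean document; each statement's English description precedes it below -/
import Mathlib

section
/- For n ≥ 5 the constant c(n) := ((n-2)/2) c₀² ∫_{ℝⁿ} (|x|²-1)/(1+|x|²)^{n-1} dx is strictly positive, where c₀ = (n(n-2))^{(n-2)/4}. -/
/-!
In polar coordinates the integral is a positive multiple of
`I = ∫₀^∞ r^(n-1) (r² - 1) / (1 + r²)^(n-1) dr`. The substitution `r ↦ 1/r` turns `I` into
`∫₀^∞ r^(n-5) (1 - r²) / (1 + r²)^(n-1) dr`, and adding the two expressions gives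
`2 I = ∫₀^∞ r^(n-5) (r² - 1)² / (1 + r²)^(n-2) dr > 0`.
-/

open Real MeasureTheory Set

section InversionSubstitution

variable {E : Type*} [NormedAddCommGroup E] [NormedSpace ℝ E]

lemma rpow_neg_one_comp_eqOn (g : ℝ → E) :
    EqOn (fun x : ℝ => (|(-1 : ℝ)| * x ^ ((-1 : ℝ) - 1)) • g (x ^ (-1 : ℝ)))
      (fun x => (x ^ 2)⁻¹ • g x⁻¹) (Ioi 0) := by
  intro x hx
  norm_num [rpow_neg_one, rpow_neg (le_of_lt hx)]

theorem integrableOn_Ioi_comp_inv_iff (g : ℝ → E) :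
    IntegrableOn (fun x => (x ^ 2)⁻¹ • g x⁻¹) (Ioi 0) ↔ IntegrableOn g (Ioi 0) := by
  rw [← integrableOn_Ioi_comp_rpow_iff g (by norm_num : (-1 : ℝ) ≠ 0),
    integrableOn_congr_fun (rpow_neg_one_comp_eqOn g) measurableSet_Ioi]

theorem integral_Ioi_comp_inv (g : ℝ → E) :
    ∫ x in Ioi 0, (x ^ 2)⁻¹ • g x⁻¹ = ∫ x in Ioi 0, g x := by
  rw [← integral_comp_rpow_Ioi g (by norm_num : (-1 : ℝ) ≠ 0),
    setIntegral_congr_fun measurableSet_Ioi (rpow_neg_one_comp_eqOn g)]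

end InversionSubstitution

section Radial

variable (m : ℕ)

lemma abs_pow_mul_sq_sub_one_div_le (r : ℝ) :
    |r ^ (m + 4) * ((r ^ 2 - 1) / (1 + r ^ 2) ^ (m + 4))| ≤ (1 + r ^ 2)⁻¹ := by
  have hpos : 0 < 1 + r ^ 2 := by positivity
  have h_abs : |r| ≤ 1 + r ^ 2 := by nlinarith [abs_nonneg r, sq_abs r]
  have h_num : |r ^ 2 - 1| ≤ 1 + r ^ 2 := abs_le.2 ⟨by nlinarith, by linarith⟩
  have h_pow : |r| ^ (m + 4) ≤ (1 + r ^ 2) ^ (m + 2) := calc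
    |r| ^ (m + 4) = |r| ^ m * (r ^ 2) ^ 2 := by rw [← sq_abs r]; ring
    _ ≤ (1 + r ^ 2) ^ m * (1 + r ^ 2) ^ 2 := by gcongr; linarith
    _ = (1 + r ^ 2) ^ (m + 2) := by ring
  rw [abs_mul, abs_div, abs_pow, abs_of_pos (pow_pos hpos _)]
  calc |r| ^ (m + 4) * (|r ^ 2 - 1| / (1 + r ^ 2) ^ (m + 4))
      ≤ (1 + r ^ 2) ^ (m + 2) * ((1 + r ^ 2) / (1 + r ^ 2) ^ (m + 4)) := by gcongr
    _ = (1 + r ^ 2)⁻¹ := by field_simp; ring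

lemma integrable_pow_mul_sq_sub_one_div :
    Integrable fun r : ℝ => r ^ (m + 4) * ((r ^ 2 - 1) / (1 + r ^ 2) ^ (m + 4)) := by
  refine integrable_inv_one_add_sq.mono' (by fun_prop) (.of_forall fun r => ?_)
  exact (Real.norm_eq_abs _).symm ▸ abs_pow_mul_sq_sub_one_div_le m r

lemma inv_sq_mul_pow_inv_mul (r : ℝ) (hr : r ≠ 0) :
    (r ^ 2)⁻¹ * (r⁻¹ ^ (m + 4) * ((r⁻¹ ^ 2 - 1) / (1 + r⁻¹ ^ 2) ^ (m + 4))) =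
      r ^ m * ((1 - r ^ 2) / (1 + r ^ 2) ^ (m + 4)) := by
  have hpos : 0 < 1 + r ^ 2 := by positivity
  rw [show 1 + r⁻¹ ^ 2 = (1 + r ^ 2) / r ^ 2 by field_simp; ring, div_pow, ← pow_mul]
  simp only [inv_pow]
  field_simp
  ring

lemma pow_mul_sq_sub_one_div_add (r : ℝ) :
    r ^ (m + 4) * ((r ^ 2 - 1) / (1 + r ^ 2) ^ (m + 4)) +
        r ^ m * ((1 - r ^ 2) / (1 + r ^ 2) ^ (m + 4)) =
      r ^ m * ((r ^ 2 - 1) ^ 2 / (1 + r ^ 2) ^ (m + 3)) := by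
  have hpos : 0 < 1 + r ^ 2 := by positivity
  field_simp
  ring

theorem integral_Ioi_pow_mul_sq_sub_one_div_pos :
    0 < ∫ r in Ioi (0 : ℝ), r ^ (m + 4) * ((r ^ 2 - 1) / (1 + r ^ 2) ^ (m + 4)) := by
  set f : ℝ → ℝ := fun r => r ^ (m + 4) * ((r ^ 2 - 1) / (1 + r ^ 2) ^ (m + 4))
  set f_inv : ℝ → ℝ := fun r => r ^ m * ((1 - r ^ 2) / (1 + r ^ 2) ^ (m + 4))
  have h_inv : EqOn (fun r => (r ^ 2)⁻¹ • f r⁻¹) f_inv (Ioi 0) :=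
    fun r hr => inv_sq_mul_pow_inv_mul m r hr.ne'
  have hf : IntegrableOn f (Ioi 0) := (integrable_pow_mul_sq_sub_one_div m).integrableOn
  have hf_inv : IntegrableOn f_inv (Ioi 0) :=
    (integrableOn_congr_fun h_inv measurableSet_Ioi).1 ((integrableOn_Ioi_comp_inv_iff f).2 hf)
  have h_eq : ∫ r in Ioi 0, f r = ∫ r in Ioi 0, f_inv r := by
    rw [← integral_Ioi_comp_inv f, setIntegral_congr_fun measurableSet_Ioi h_inv]
  have h_sum_pos : 0 < ∫ r in Ioi 0, (f r + f_inv r) := by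
    have h_nonneg : 0 ≤ᵐ[volume.restrict (Ioi 0)] fun r => f r + f_inv r := by
      filter_upwards [ae_restrict_mem measurableSet_Ioi] with r (hr : 0 < r)
      simp only [f, f_inv, pow_mul_sq_sub_one_div_add]
      positivity
    rw [setIntegral_pos_iff_support_of_nonneg_ae h_nonneg (hf.add hf_inv)]
    refine (Measure.measure_Ioi_pos volume 1).trans_le
      (measure_mono fun r (hr : 1 < r) => ⟨?_, zero_lt_one.trans hr⟩)
    have : 0 < r ^ 2 - 1 := by nlinarith
    simp only [Function.mem_support, f, f_inv, pow_mul_sq_sub_one_div_add]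
    positivity
  rw [integral_add hf hf_inv, ← h_eq] at h_sum_pos
  linarith

end Radial

theorem integral_norm_sq_sub_one_div_pos {E : Type*} [NormedAddCommGroup E] [NormedSpace ℝ E]
    [FiniteDimensional ℝ E] [MeasurableSpace E] [BorelSpace E] (μ : Measure E)
    [μ.IsAddHaarMeasure] (hE : 5 ≤ Module.finrank ℝ E) :
    0 < ∫ x, (‖x‖ ^ 2 - 1) / (1 + ‖x‖ ^ 2) ^ (Module.finrank ℝ E - 1) ∂μ := by
  obtain ⟨m, hm⟩ : ∃ m, Module.finrank ℝ E = m + 5 := ⟨_, (Nat.sub_add_cancel hE).symm⟩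
  have : Nontrivial E := Module.nontrivial_of_finrank_pos (R := ℝ) (by omega)
  have h_ball : 0 < μ.real (Metric.ball 0 1) :=
    ENNReal.toReal_pos (Metric.measure_ball_pos μ 0 one_pos).ne' measure_ball_lt_top.ne
  rw [integral_fun_norm_addHaar μ fun r => (r ^ 2 - 1) / (1 + r ^ 2) ^ (Module.finrank ℝ E - 1),
    hm, show m + 5 - 1 = m + 4 from rfl]
  simp only [smul_eq_mul, nsmul_eq_mul]
  have := integral_Ioi_pow_mul_sq_sub_one_div_pos m
  positivity

/-- For `n ≥ 5` the constant
`c(n) = ((n-2)/2) c₀² ∫_{ℝⁿ} (|x|²-1)/(1+|x|²)^{n-1} dx` is strictly positive. -/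
theorem cn_pos (n : ℕ) (hn : 5 ≤ n) :
    0 < (((n : ℝ) - 2) / 2) * (((n : ℝ) * ((n : ℝ) - 2)) ^ (((n : ℝ) - 2) / 4)) ^ 2 *
      ∫ x : EuclideanSpace ℝ (Fin n), (‖x‖ ^ 2 - 1) / (1 + ‖x‖ ^ 2) ^ (n - 1) := by
  have hn' : (5 : ℝ) ≤ n := by exact_mod_cast hn
  have h_integral := integral_norm_sq_sub_one_div_pos (volume : Measure (EuclideanSpace ℝ (Fin n)))
    (by rwa [finrank_euclideanSpace_fin])
  rw [finrank_euclideanSpace_fin] at h_integral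
  have h_base : 0 < (n : ℝ) * ((n : ℝ) - 2) := by nlinarith
  have h_factor : 0 < ((n : ℝ) - 2) / 2 := by linarith
  positivity
end

section
/- Also (1/λᵢ)|∂ε_{ij}/∂aᵢ| ≤ c √(λⱼ/λᵢ) ε_{ij}^{(n-1)/(n-2)} for a dimensional constant c, for all λᵢ, λⱼ > 0 and aᵢ, aⱼ ∈ ℝⁿ with n ≥ 3. -/
open Real

/-- The bubble interaction quantity `ε_{ij}`. -/
noncomputable def bubbleInter (n : ℕ) (li lj : ℝ) (x y : EuclideanSpace ℝ (Fin n)) : ℝ :=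
  (li / lj + lj / li + li * lj * ‖x - y‖ ^ 2) ^ (((2 : ℝ) - n) / 2)

/-- `(1/λᵢ)|∂ε_{ij}/∂aᵢ| ≤ c √(λⱼ/λᵢ) ε_{ij}^{(n-1)/(n-2)}` for a dimensional constant. -/
theorem grad_bubbleInter_sqrt_bound (n : ℕ) (hn : 3 ≤ n) :
    ∃ c : ℝ, 0 < c ∧
      ∀ (li lj : ℝ) (ai aj : EuclideanSpace ℝ (Fin n)),
        0 < li → 0 < lj →
        (1 / li) * ‖fderiv ℝ (fun x => bubbleInter n li lj x aj) ai‖ ≤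
          c * Real.sqrt (lj / li) *
            bubbleInter n li lj ai aj ^ (((n : ℝ) - 1) / ((n : ℝ) - 2)) := by
  have hn3 : (3 : ℝ) ≤ (n : ℝ) := by exact_mod_cast hn
  have hcpos : (0 : ℝ) < (n : ℝ) - 2 := by linarith
  refine ⟨(n : ℝ) - 2, hcpos, ?_⟩
  intro li lj ai aj hli hlj
  set d : ℝ := ‖ai - aj‖ with hd
  have hd0 : 0 ≤ d := norm_nonneg _
  set A : ℝ := li / lj + lj / li + li * lj * ‖ai - aj‖ ^ 2 with hA
  have hApos : 0 < A := by positivity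
  -- derivative computation
  have h1 : HasFDerivAt (fun x : EuclideanSpace ℝ (Fin n) => ‖x - aj‖ ^ 2)
      ((2 : ℝ) • (innerSL ℝ (ai - aj))) ai := by
    simpa [map_sub, two_smul] using ((hasFDerivAt_id ai).sub_const aj).norm_sq
  have h2 : HasFDerivAt
      (fun x : EuclideanSpace ℝ (Fin n) => li / lj + lj / li + li * lj * ‖x - aj‖ ^ 2)
      ((li * lj) • ((2 : ℝ) • (innerSL ℝ (ai - aj)))) ai :=
    (h1.const_mul (li * lj)).const_add _
  have h3 : HasFDerivAt (fun x => bubbleInter n li lj x aj)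
      (((((2 : ℝ) - n) / 2) * A ^ ((((2 : ℝ) - n) / 2) - 1)) •
        ((li * lj) • ((2 : ℝ) • (innerSL ℝ (ai - aj))))) ai :=
    h2.rpow_const (Or.inl hApos.ne')
  have hrp : (0 : ℝ) < A ^ ((((2 : ℝ) - n) / 2) - 1) := Real.rpow_pos_of_pos hApos _
  have h4 : ‖fderiv ℝ (fun x => bubbleInter n li lj x aj) ai‖
      = (((n : ℝ) - 2) / 2) * A ^ ((((2 : ℝ) - n) / 2) - 1) * (li * lj) * (2 * d) := by
    rw [h3.fderiv, norm_smul, norm_smul, norm_smul, innerSL_apply_norm,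
      Real.norm_eq_abs, Real.norm_eq_abs, Real.norm_eq_abs, abs_mul,
      abs_of_pos hrp, abs_of_pos (by positivity : (0:ℝ) < li * lj)]
    have : |(((2 : ℝ) - n) / 2)| = ((n : ℝ) - 2) / 2 := by
      rw [abs_of_nonpos (by linarith)]; ring
    rw [this]
    norm_num [hd]
    ring
  -- the RHS power of A
  have hbub : bubbleInter n li lj ai aj ^ (((n : ℝ) - 1) / ((n : ℝ) - 2))
      = A ^ (-(((n : ℝ) - 1) / 2)) := by
    rw [bubbleInter, ← hA, ← Real.rpow_mul hApos.le]
    · congr 1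
      field_simp
      ring
    -- no extra goals expected
  -- key inequality
  have hsplit : A ^ ((((2 : ℝ) - n) / 2) - 1)
      = A ^ (-(((n : ℝ) - 1) / 2)) * A ^ (-(1 / 2 : ℝ)) := by
    rw [← Real.rpow_add hApos]; congr 1; ring
  have hkey : lj * d * A ^ (-(1 / 2 : ℝ)) ≤ Real.sqrt (lj / li) := by
    have hAhalf : A ^ (-(1 / 2 : ℝ)) = (Real.sqrt A)⁻¹ := by
      rw [Real.rpow_neg hApos.le, Real.sqrt_eq_rpow]
    have hsA : 0 < Real.sqrt A := Real.sqrt_pos.2 hApos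
    rw [hAhalf, ← div_eq_mul_inv, div_le_iff₀ hsA, ← Real.sqrt_mul (by positivity)]
    have h5 : (lj * d) ^ 2 ≤ lj / li * A := by
      have : li * lj * d ^ 2 ≤ A := by
        have h6 : 0 < li / lj + lj / li := by positivity
        rw [hA, hd]; nlinarith
      calc (lj * d) ^ 2 = lj / li * (li * lj * d ^ 2) := by field_simp
        _ ≤ lj / li * A := by
            apply mul_le_mul_of_nonneg_left this (by positivity)
    calc lj * d = Real.sqrt ((lj * d) ^ 2) := (Real.sqrt_sq (by positivity)).symm
      _ ≤ Real.sqrt (lj / li * A) := Real.sqrt_le_sqrt h5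
  -- assemble
  rw [h4, hbub]
  have hlhs : 1 / li * ((((n : ℝ) - 2) / 2) * A ^ ((((2 : ℝ) - n) / 2) - 1) * (li * lj) * (2 * d))
      = ((n : ℝ) - 2) * (lj * d * A ^ ((((2 : ℝ) - n) / 2) - 1)) := by
    field_simp
  rw [hlhs, hsplit]
  have : lj * d * (A ^ (-(((n : ℝ) - 1) / 2)) * A ^ (-(1 / 2 : ℝ)))
      ≤ Real.sqrt (lj / li) * A ^ (-(((n : ℝ) - 1) / 2)) := by
    have hApow : 0 ≤ A ^ (-(((n : ℝ) - 1) / 2)) := (Real.rpow_pos_of_pos hApos _).le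
    calc lj * d * (A ^ (-(((n : ℝ) - 1) / 2)) * A ^ (-(1 / 2 : ℝ)))
        = (lj * d * A ^ (-(1 / 2 : ℝ))) * A ^ (-(((n : ℝ) - 1) / 2)) := by ring
      _ ≤ Real.sqrt (lj / li) * A ^ (-(((n : ℝ) - 1) / 2)) :=
          mul_le_mul_of_nonneg_right hkey hApow
  calc ((n : ℝ) - 2) * (lj * d * (A ^ (-(((n : ℝ) - 1) / 2)) * A ^ (-(1 / 2 : ℝ))))
      ≤ ((n : ℝ) - 2) * (Real.sqrt (lj / li) * A ^ (-(((n : ℝ) - 1) / 2))) :=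
        mul_le_mul_of_nonneg_left this hcpos.le
    _ = ((n : ℝ) - 2) * Real.sqrt (lj / li) * A ^ (-(((n : ℝ) - 1) / 2)) := by ring
end
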